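/- For every s∈S, the linear map ψ_s: V→V is invertible; explicitly, its inverse ρ_s is given by: ρ_s(e_β) = x^{-1}y^{-2}·e_{α_s} if β=α_s; ρ_s(e_β) = e_β - y^{-2}T(s,β)·e_{α_s} if ⟨α_s,β⟩=0; ρ_s(e_β) = (1-y^{-1})·e_β + e_{β-aα_s} - y^{-2}T(s,β-aα_s)·e_{α_s} + y^{-2}(y^{-1}-1)T(s,β)·e_{α_s} if ⟨α_s,β⟩=a>0 and β≠α_s; and ρ_s(e_β) = y^{-1}·e_{β+aα_s} - y^{-3}T(s,β+aα_s)·e_{α_s} if ⟨α_s,β⟩=-a<0. -/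
import Mathlib


noncomputable section

namespace ArtinInj

/-- `altProd a b m` is the alternating product `prod(a,b;m) = abab⋯` with `m` factors. -/
def altProd {G : Type*} [Monoid G] (a b : G) : ℕ → G
  | 0 => 1
  | n + 1 => a * altProd b a n

variable {S : Type} [DecidableEq S] [Fintype S]

/-- The braid relations on the free monoid over `S`.  Here `M s t = 0` encodes
`m_{s,t} = ∞`. -/
def braidRel (M : CoxeterMatrix S) (u v : FreeMonoid S) : Prop :=
  ∃ s t : S, s ≠ t ∧ M s t ≠ 0 ∧
    u = altProd (FreeMonoid.of s) (FreeMonoid.of t) (M s t) ∧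
    v = altProd (FreeMonoid.of t) (FreeMonoid.of s) (M s t)

/-- The Artin monoid `G_Γ⁺` of a Coxeter matrix. -/
abbrev ArtinMonoid (M : CoxeterMatrix S) : Type := PresentedMonoid (braidRel M)

/-- The generators `σ_s` of the Artin monoid. -/
def sigma (M : CoxeterMatrix S) (s : S) : ArtinMonoid M := PresentedMonoid.of (braidRel M) s

/-- The braid relators in the free group over `S`. -/
def artinRels (M : CoxeterMatrix S) : Set (FreeGroup S) :=
  {r | ∃ s t : S, s ≠ t ∧ M s t ≠ 0 ∧
    r = altProd (FreeGroup.of s) (FreeGroup.of t) (M s t) *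
        (altProd (FreeGroup.of t) (FreeGroup.of s) (M s t))⁻¹}

/-- The Artin group `G_Γ` of a Coxeter matrix. -/
abbrev ArtinGroup (M : CoxeterMatrix S) : Type := PresentedGroup (artinRels M)

/-- The generators `σ_s` of the Artin group. -/
def agen (M : CoxeterMatrix S) (s : S) : ArtinGroup M := PresentedGroup.of s

/-- The partial order on the Artin monoid: `g < h ⟺ ∃ f, g f = h`. -/
def mle {M : CoxeterMatrix S} (g h : ArtinMonoid M) : Prop := ∃ f, g * f = h

/-- A Coxeter matrix is of small type when all off-diagonal entries are 2 or 3. -/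
def SmallType (M : CoxeterMatrix S) : Prop := ∀ s t : S, s ≠ t → M s t = 2 ∨ M s t = 3

/-- `m ≥ 3` in `{2,3,...,∞}`, where `∞` is encoded by `0`. -/
def BigEntry (m : ℕ) : Prop := m = 0 ∨ 3 ≤ m

/-- A Coxeter matrix has no triangle when there are no three distinct vertices with
pairwise entries `≥ 3`. -/
def NoTriangle (M : CoxeterMatrix S) : Prop :=
  ¬ ∃ s t r : S, s ≠ t ∧ s ≠ r ∧ t ≠ r ∧
      BigEntry (M s t) ∧ BigEntry (M s r) ∧ BigEntry (M t r)

variable {W : Type} [Group W]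

/-- The partial order `u < v` on the Coxeter group: `l(v) = l(u) + l(u⁻¹ v)`. -/
def wle {M : CoxeterMatrix S} (cs : CoxeterSystem M W) (u v : W) : Prop :=
  cs.length v = cs.length u + cs.length (u⁻¹ * v)

/-- The simple root `α_s`. -/
def sroot (s : S) : S → ℝ := Pi.single s 1

/-- The entries `⟨α_s, α_t⟩ = -2 cos (π / m_{s,t})` of the canonical bilinear form
(equal to `-2` when `m_{s,t} = ∞`, encoded by `M s t = 0`). -/
def formEnt (M : CoxeterMatrix S) (s t : S) : ℝ :=
  if M s t = 0 then -2 else -2 * Real.cos (Real.pi / (M s t : ℝ))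

/-- The canonical symmetric bilinear form `⟨·,·⟩` on `U = ℝ^S`. -/
def form (M : CoxeterMatrix S) (x v : S → ℝ) : ℝ :=
  ∑ s : S, ∑ t : S, x s * v t * formEnt M s t

/-- `ρ` is the canonical (geometric) representation of the Coxeter system. -/
def IsGeomRep (M : CoxeterMatrix S) (cs : CoxeterSystem M W)
    (ρ : W →* ((S → ℝ) →ₗ[ℝ] (S → ℝ))) : Prop :=
  ∀ (s : S) (x : S → ℝ), ρ (cs.simple s) x = x - form M (sroot s) x • sroot s

/-- The root system `Φ = {w α_s}`. -/
def Phi (ρ : W →* ((S → ℝ) →ₗ[ℝ] (S → ℝ))) : Set (S → ℝ) :=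
  {u | ∃ (w : W) (s : S), u = ρ w (sroot s)}

/-- The positive roots `Φ⁺`. -/
def PhiPlus (ρ : W →* ((S → ℝ) →ₗ[ℝ] (S → ℝ))) : Set (S → ℝ) :=
  {u | u ∈ Phi ρ ∧ ∀ s : S, 0 ≤ u s}

/-- The negative roots `Φ⁻ = -Φ⁺`. -/
def PhiMinus (ρ : W →* ((S → ℝ) →ₗ[ℝ] (S → ℝ))) : Set (S → ℝ) :=
  {u | -u ∈ PhiPlus ρ}

/-- The inversion set `Φ_w = {β ∈ Φ⁺ : w⁻¹ β ∈ Φ⁻}`. -/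
def invSet (ρ : W →* ((S → ℝ) →ₗ[ℝ] (S → ℝ))) (w : W) : Set (S → ℝ) :=
  {u | u ∈ PhiPlus ρ ∧ ρ w⁻¹ u ∈ PhiMinus ρ}

/-- The depth `dp(β) = min { l(w) : w β ∈ Φ⁻ }` of a positive root. -/
def dp {M : CoxeterMatrix S} (cs : CoxeterSystem M W)
    (ρ : W →* ((S → ℝ) →ₗ[ℝ] (S → ℝ))) (u : S → ℝ) : ℕ :=
  sInf {l : ℕ | ∃ w : W, ρ w u ∈ PhiMinus ρ ∧ cs.length w = l}

/-- Closed subsets of `Φ⁺`. -/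
def ClosedSub (M : CoxeterMatrix S) (ρ : W →* ((S → ℝ) →ₗ[ℝ] (S → ℝ)))
    (A : Set (S → ℝ)) : Prop :=
  A ⊆ PhiPlus ρ ∧ A.Finite ∧
    (∀ a ∈ A, ∀ b ∈ A, -1 ≤ form M a b) ∧
    (∀ a ∈ A, ∀ b ∈ A, form M a b = -1 → a + b ∈ A)

/-- The field `K = ℚ(x,y)` of rational functions in two variables over `ℚ`. -/
abbrev KK : Type := FractionRing (MvPolynomial (Fin 2) ℚ)

/-- The variable `x` of `K`. -/
def Xv : KK := algebraMap (MvPolynomial (Fin 2) ℚ) KK (MvPolynomial.X 0)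

/-- The variable `y` of `K`. -/
def Yv : KK := algebraMap (MvPolynomial (Fin 2) ℚ) KK (MvPolynomial.X 1)

/-- The image in `K` of a polynomial of `ℚ[y]`. -/
def Ty (p : Polynomial ℚ) : KK := Polynomial.eval₂ (Rat.castHom KK) Yv p

/-- The `K`-vector space `V` with basis `{e_β : β ∈ Φ⁺}`. -/
abbrev VV (ρ : W →* ((S → ℝ) →ₗ[ℝ] (S → ℝ))) : Type := ↥(PhiPlus ρ) →₀ KK

/-- The basis vectors `e_β` of `V` (defined to be `0` for `β ∉ Φ⁺`). -/
def ebase (ρ : W →* ((S → ℝ) →ₗ[ℝ] (S → ℝ))) (u : S → ℝ) : VV ρ := by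
  haveI := Classical.dec (u ∈ PhiPlus ρ)
  exact if h : u ∈ PhiPlus ρ then Finsupp.single (⟨u, h⟩ : ↥(PhiPlus ρ)) (1 : KK) else 0

/-- `φ : S → End(V)` is the family of linear maps `φ_s` of Section 3 of the paper. -/
def PhiMapSpec (M : CoxeterMatrix S) (ρ : W →* ((S → ℝ) →ₗ[ℝ] (S → ℝ)))
    (φ : S → Module.End KK (VV ρ)) : Prop :=
  ∀ s : S, ∀ u ∈ PhiPlus ρ,
    (u = sroot s → φ s (ebase ρ u) = 0) ∧
    (form M (sroot s) u = 0 → φ s (ebase ρ u) = ebase ρ u) ∧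
    (0 < form M (sroot s) u → u ≠ sroot s →
      φ s (ebase ρ u) = Yv • ebase ρ (u - form M (sroot s) u • sroot s)) ∧
    (form M (sroot s) u < 0 →
      φ s (ebase ρ u) = (1 - Yv) • ebase ρ u + ebase ρ (u - form M (sroot s) u • sroot s))

/-- `T : S × Φ⁺ → ℚ[y]` is the family of polynomials `T(s,β)` defined by (D1)–(D9),
by induction on the depth of `β`; the recursion may be applied with any `t ∈ S`
such that `dp(t β) = dp(β) - 1`. -/
def TSpec (M : CoxeterMatrix S) (cs : CoxeterSystem M W)
    (ρ : W →* ((S → ℝ) →ₗ[ℝ] (S → ℝ))) (T : S → (S → ℝ) → Polynomial ℚ) : Prop :=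
  (∀ s : S, T s (sroot s) = Polynomial.X ^ 2) ∧
  (∀ s t : S, t ≠ s → T s (sroot t) = 0) ∧
  (∀ s t : S, ∀ u ∈ PhiPlus ρ, 2 ≤ dp cs ρ u →
    0 < form M (sroot t) u → dp cs ρ (ρ (cs.simple t) u) = dp cs ρ u - 1 →
    (0 < form M (sroot s) u →
      T s u = Polynomial.X ^ (dp cs ρ u) * (Polynomial.X - 1)) ∧
    (form M (sroot s) u = 0 → form M (sroot s) (sroot t) = 0 →
      T s u = Polynomial.X * T s (u - form M (sroot t) u • sroot t)) ∧
    (form M (sroot s) u = 0 → form M (sroot s) (sroot t) = -1 →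
      T s u = (Polynomial.X - 1) * T s (u - form M (sroot t) u • sroot t) +
        Polynomial.X * T t (u - form M (sroot t) u • sroot s - form M (sroot t) u • sroot t)) ∧
    (form M (sroot s) u < 0 → form M (sroot s) (sroot t) = 0 →
      T s u = Polynomial.X * T s (u - form M (sroot t) u • sroot t)) ∧
    (form M (sroot s) u < 0 → form M (sroot s) (sroot t) = -1 →
      -(form M (sroot s) u) < form M (sroot t) u →
      T s u = (Polynomial.X - 1) * T s (u - form M (sroot t) u • sroot t) +
        Polynomial.X * T t (u - (form M (sroot t) u + form M (sroot s) u) • sroot s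
          - form M (sroot t) u • sroot t)) ∧
    (form M (sroot s) u < 0 → form M (sroot s) (sroot t) = -1 →
      -(form M (sroot s) u) = form M (sroot t) u →
      T s u = T t (u - form M (sroot t) u • sroot t) +
        (Polynomial.X - 1) * T s (u - form M (sroot t) u • sroot t)) ∧
    (form M (sroot s) u < 0 → form M (sroot s) (sroot t) = -1 →
      form M (sroot t) u < -(form M (sroot s) u) →
      T s u = Polynomial.X * T s (u - form M (sroot t) u • sroot t) +
        T t (u - form M (sroot t) u • sroot t) +
        Polynomial.X ^ (dp cs ρ u - 1) * (1 - Polynomial.X)))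

/-- `ψ : S → End(V)` is the family of linear maps `ψ_s(e_β) = φ_s(e_β) + x T(s,β) e_{α_s}`. -/
def PsiSpec (M : CoxeterMatrix S) (ρ : W →* ((S → ℝ) →ₗ[ℝ] (S → ℝ)))
    (T : S → (S → ℝ) → Polynomial ℚ) (ψ : S → Module.End KK (VV ρ)) : Prop :=
  ∀ s : S, ∀ u ∈ PhiPlus ρ,
    (u = sroot s → ψ s (ebase ρ u) = (Xv * Ty (T s u)) • ebase ρ (sroot s)) ∧
    (form M (sroot s) u = 0 →
      ψ s (ebase ρ u) = ebase ρ u + (Xv * Ty (T s u)) • ebase ρ (sroot s)) ∧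
    (0 < form M (sroot s) u → u ≠ sroot s →
      ψ s (ebase ρ u) = Yv • ebase ρ (u - form M (sroot s) u • sroot s) +
        (Xv * Ty (T s u)) • ebase ρ (sroot s)) ∧
    (form M (sroot s) u < 0 →
      ψ s (ebase ρ u) = (1 - Yv) • ebase ρ u +
        ebase ρ (u - form M (sroot s) u • sroot s) +
        (Xv * Ty (T s u)) • ebase ρ (sroot s))

/-- The set `σ_s ∗ A` (Lemma 4.4 of the paper). -/
def starSet (M : CoxeterMatrix S) (ρ : W →* ((S → ℝ) →ₗ[ℝ] (S → ℝ)))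
    (s : S) (A : Set (S → ℝ)) : Set (S → ℝ) :=
  {sroot s} ∪
  {u | u ∈ PhiPlus ρ ∧ form M (sroot s) u = 0 ∧ u ∈ A} ∪
  {u | u ∈ PhiPlus ρ ∧ 0 < form M (sroot s) u ∧ u ≠ sroot s ∧
        u - form M (sroot s) u • sroot s ∈ A} ∪
  {u | u ∈ PhiPlus ρ ∧ form M (sroot s) u < 0 ∧ u ∈ A ∧
        u - form M (sroot s) u • sroot s ∈ A}


set_option linter.unusedSectionVars false
set_option linter.unusedVariables false
set_option maxHeartbeats 1000000
set_option linter.unnecessarySimpa false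
set_option linter.unreachableTactic false
set_option linter.unnecessarySeqFocus false
set_option linter.unusedTactic false

section geom

variable (M : CoxeterMatrix S)

lemma formEnt_symm (s t : S) : formEnt M s t = formEnt M t s := by
  unfold formEnt
  rw [M.isSymm.apply s t]

lemma formEnt_self (s : S) : formEnt M s s = 2 := by
  unfold formEnt
  rw [M.diagonal s]
  norm_num

lemma formEnt_two {s t : S} (h : M s t = 2) : formEnt M s t = 0 := by
  unfold formEnt
  rw [h]
  norm_num [Real.cos_pi_div_two]

lemma formEnt_three {s t : S} (h : M s t = 3) : formEnt M s t = -1 := by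
  unfold formEnt
  rw [h]
  norm_num [Real.cos_pi_div_three]

lemma form_symm (x v : S → ℝ) : form M x v = form M v x := by
  unfold form
  rw [Finset.sum_comm]
  refine Finset.sum_congr rfl fun a _ => Finset.sum_congr rfl fun b _ => ?_
  rw [formEnt_symm M b a]; ring

lemma form_add_right (x u v : S → ℝ) : form M x (u + v) = form M x u + form M x v := by
  unfold form
  rw [← Finset.sum_add_distrib]
  refine Finset.sum_congr rfl fun a _ => ?_
  rw [← Finset.sum_add_distrib]
  refine Finset.sum_congr rfl fun b _ => ?_
  simp only [Pi.add_apply]; ring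

lemma form_smul_right (x v : S → ℝ) (c : ℝ) : form M x (c • v) = c * form M x v := by
  unfold form
  rw [Finset.mul_sum]
  refine Finset.sum_congr rfl fun a _ => ?_
  rw [Finset.mul_sum]
  refine Finset.sum_congr rfl fun b _ => ?_
  simp only [Pi.smul_apply, smul_eq_mul]; ring

lemma form_sub_smul_right (x u v : S → ℝ) (c : ℝ) :
    form M x (u - c • v) = form M x u - c * form M x v := by
  have : u - c • v = u + (-c) • v := by module
  rw [this, form_add_right, form_smul_right]; ring

lemma form_sroot_left (s : S) (v : S → ℝ) :
    form M (sroot s) v = ∑ t : S, v t * formEnt M s t := by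
  unfold form sroot
  rw [Finset.sum_eq_single s]
  · refine Finset.sum_congr rfl fun b _ => ?_
    rw [Pi.single_eq_same]; ring
  · intro b _ hb
    apply Finset.sum_eq_zero
    intro t _
    rw [Pi.single_eq_of_ne hb]; ring
  · intro h; exact absurd (Finset.mem_univ s) h

lemma form_sroot_sroot_self (s : S) : form M (sroot s) (sroot s) = 2 := by
  rw [form_sroot_left, Finset.sum_eq_single s]
  · rw [sroot, Pi.single_eq_same, formEnt_self]; ring
  · intro b _ hb; rw [sroot, Pi.single_eq_of_ne hb]; ring
  · intro h; exact absurd (Finset.mem_univ s) h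

lemma form_sroot_sroot (s t : S) (hst : t ≠ s) :
    form M (sroot s) (sroot t) = formEnt M s t := by
  rw [form_sroot_left, Finset.sum_eq_single t]
  · rw [sroot, Pi.single_eq_same]; ring
  · intro b _ hb; rw [sroot, Pi.single_eq_of_ne hb]; ring
  · intro h; exact absurd (Finset.mem_univ t) h

/-- The form value after reflecting. -/
lemma form_sroot_refl (s : S) (u : S → ℝ) :
    form M (sroot s) (u - form M (sroot s) u • sroot s) = -(form M (sroot s) u) := by
  rw [form_sub_smul_right, form_sroot_sroot_self]
  ring

/-- Invariance of the form under one simple reflection. -/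
lemma form_refl_invariant (s : S) (x v : S → ℝ) :
    form M (x - form M (sroot s) x • sroot s) (v - form M (sroot s) v • sroot s) =
      form M x v := by
  rw [form_sub_smul_right, form_symm M (x - form M (sroot s) x • sroot s) v,
    form_sub_smul_right, form_symm M (x - form M (sroot s) x • sroot s) (sroot s),
    form_sub_smul_right, form_sroot_sroot_self, form_symm M v x, form_symm M v (sroot s)]
  ring

end geom

section rep

variable {M : CoxeterMatrix S} {cs : CoxeterSystem M W}
  {rho : W →* ((S → ℝ) →ₗ[ℝ] (S → ℝ))} (hrho : IsGeomRep M cs rho)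

include hrho

lemma form_rho_invariant (w : W) (x v : S → ℝ) :
    form M (rho w x) (rho w v) = form M x v := by
  induction w using cs.simple_induction_left with
  | one => simp
  | mul_simple_left i w ih =>
      rw [map_mul, Module.End.mul_apply, Module.End.mul_apply, hrho, hrho,
        form_refl_invariant, ih]

lemma form_root_self {u : S → ℝ} (hu : u ∈ Phi rho) : form M u u = 2 := by
  obtain ⟨w, s, rfl⟩ := hu
  rw [form_rho_invariant hrho, form_sroot_sroot_self]

lemma rho_mem_Phi {u : S → ℝ} (hu : u ∈ Phi rho) (w : W) : rho w u ∈ Phi rho := by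
  obtain ⟨w', s, rfl⟩ := hu
  exact ⟨w * w', s, by rw [map_mul]; rfl⟩

lemma sroot_mem_Phi (s : S) : sroot s ∈ Phi rho := ⟨1, s, by simp⟩

lemma sroot_mem_PhiPlus (s : S) : sroot s ∈ PhiPlus rho := by
  refine ⟨sroot_mem_Phi hrho s, fun t => ?_⟩
  unfold sroot
  rcases eq_or_ne t s with rfl | h
  · rw [Pi.single_eq_same]; norm_num
  · rw [Pi.single_eq_of_ne h]

lemma rho_simple_sroot_self (s : S) : rho (cs.simple s) (sroot s) = -(sroot s) := by
  rw [hrho, form_sroot_sroot_self]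
  module

end rep


section pos

variable {M : CoxeterMatrix S} {cs : CoxeterSystem M W}
  {rho : W →* ((S → ℝ) →ₗ[ℝ] (S → ℝ))} (hrho : IsGeomRep M cs rho)
  (hsmall : SmallType M)

include hrho hsmall

lemma braid3 {s i : S} (h3 : M s i = 3) :
    cs.simple s * cs.simple i * cs.simple s = cs.simple i * cs.simple s * cs.simple i := by
  have h' := cs.simple_mul_simple_pow s i
  rw [h3, show (3:ℕ) = 2 + 1 from rfl, pow_succ, pow_two] at h'
  have key : (cs.simple s * cs.simple i * cs.simple s) *
      (cs.simple i * cs.simple s * cs.simple i) = 1 := by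
    rw [← h']; simp [mul_assoc]
  rw [eq_inv_of_mul_eq_one_left key]
  simp [mul_inv_rev, cs.inv_simple, mul_assoc]

lemma comm2 {s i : S} (h2 : M s i = 2) :
    cs.simple s * cs.simple i = cs.simple i * cs.simple s := by
  have h' := cs.simple_mul_simple_pow s i
  rw [h2, pow_two] at h'
  rw [eq_inv_of_mul_eq_one_left h']
  simp [mul_inv_rev, cs.inv_simple]

lemma rho_sroot_nonneg :
    ∀ n : ℕ, ∀ w : W, ∀ s : S, cs.length w = n →
      cs.length (w * cs.simple s) = cs.length w + 1 → ∀ t : S, 0 ≤ rho w (sroot s) t := by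
  intro n
  induction n using Nat.strong_induction_on with
  | _ n ih =>
    intro w s hlen hls t
    rcases Nat.eq_zero_or_pos n with hn0 | hnpos
    · have hw1 : w = 1 := cs.length_eq_zero_iff.mp (by omega)
      subst hw1
      simp only [map_one, Module.End.one_apply]
      exact (sroot_mem_PhiPlus hrho s).2 t
    · have hwne : w ≠ 1 := by
        intro h; rw [h, cs.length_one] at hlen; omega
      obtain ⟨i, hi⟩ := cs.exists_rightDescent_of_ne_one hwne
      unfold CoxeterSystem.IsRightDescent at hi
      have hilen : cs.length (w * cs.simple i) + 1 = cs.length w := by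
        rcases cs.length_mul_simple w i with h | h
        · omega
        · exact h
      have hins : i ≠ s := by
        intro h; subst h; omega
      have hww' : w = (w * cs.simple i) * cs.simple i := by
        rw [cs.simple_mul_simple_cancel_right]
      set w' := w * cs.simple i with hw'
      have hlw' : cs.length w' = n - 1 := by omega
      have hrw : rho w (sroot s) = rho w' (rho (cs.simple i) (sroot s)) := by
        rw [hww', map_mul]; rfl
      have hMis : M i s = M s i := M.isSymm.apply s i
      rcases hsmall s i (Ne.symm hins) with h2 | h3
      · -- commuting case
        have hci : rho (cs.simple i) (sroot s) = sroot s := by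
          rw [hrho, form_sroot_sroot M i s (Ne.symm hins), formEnt_symm, formEnt_two M h2]
          simp
        have hcomm := comm2 (cs := cs) (rho := rho) hrho hsmall h2
        have hl's : cs.length (w' * cs.simple s) = cs.length w' + 1 := by
          rcases cs.length_mul_simple w' s with h | h
          · exact h
          · exfalso
            have he : w' * cs.simple s * cs.simple i = w * cs.simple s := by
              rw [hw']
              calc w * cs.simple i * cs.simple s * cs.simple i
                  = w * (cs.simple i * cs.simple s * cs.simple i) := by
                    simp [mul_assoc]
                _ = w * (cs.simple s * cs.simple i * cs.simple i) := by
                    rw [← hcomm]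
                _ = w * cs.simple s := by
                    simp [mul_assoc, cs.simple_mul_simple_self]
            have hle := cs.length_mul_le (w' * cs.simple s) (cs.simple i)
            rw [he, cs.length_simple, hls] at hle
            omega
        have := ih (n-1) (by omega) w' s hlw' hl's t
        rw [hrw, hci]
        exact this
      · -- braid case
        have hform : form M (sroot i) (sroot s) = -1 := by
          rw [form_sroot_sroot M i s (Ne.symm hins), formEnt_symm, formEnt_three M h3]
        have hci : rho (cs.simple i) (sroot s) = sroot s + sroot i := by
          rw [hrho, hform]; module
        have hl'i : cs.length (w' * cs.simple i) = cs.length w' + 1 := by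
          have hwi : w' * cs.simple i = w := by
            rw [hw', cs.simple_mul_simple_cancel_right]
          rw [hwi]; omega
        have hi_nonneg := ih (n-1) (by omega) w' i hlw' hl'i t
        rcases cs.length_mul_simple w' s with hA | hB
        · have hs_nonneg := ih (n-1) (by omega) w' s hlw' hA t
          rw [hrw, hci, map_add]
          have : (rho w' (sroot s) + rho w' (sroot i)) t
              = rho w' (sroot s) t + rho w' (sroot i) t := rfl
          rw [this]
          linarith
        · -- second descent case
          set w'' := w' * cs.simple s with hw''
          have hlw'' : cs.length w'' = n - 2 := by omega
          have hn2 : 2 ≤ n := by omega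
          have hform' : form M (sroot s) (sroot i) = -1 := by
            rw [form_sroot_sroot M s i hins, formEnt_three M h3]
          have hcs : rho (cs.simple s) (sroot i) = sroot i + sroot s := by
            rw [hrho, hform']; module
          have heq : rho w (sroot s) = rho w'' (sroot i) := by
            rw [hrw, hci, map_add]
            have h1 : rho w'' = rho w' * rho (cs.simple s) := by rw [hw'', map_mul]
            rw [h1, Module.End.mul_apply, hcs, map_add]
            exact add_comm _ _
          have hbr := braid3 (cs := cs) (rho := rho) hrho hsmall h3
          have he2 : w'' * cs.simple i = w * cs.simple s * cs.simple i * cs.simple s := by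
            rw [hw'', hw']
            calc w * cs.simple i * cs.simple s * cs.simple i
                = w * (cs.simple i * cs.simple s * cs.simple i) := by simp [mul_assoc]
              _ = w * (cs.simple s * cs.simple i * cs.simple s) := by rw [← hbr]
              _ = w * cs.simple s * cs.simple i * cs.simple s := by simp [mul_assoc]
          have hl''i : cs.length (w'' * cs.simple i) = cs.length w'' + 1 := by
            rcases cs.length_mul_simple w'' i with h | h
            · exact h
            · exfalso
              have hge1 := cs.length_mul_ge_length_sub_length (w * cs.simple s) (cs.simple i)
              have hge2 := cs.length_mul_ge_length_sub_length
                (w * cs.simple s * cs.simple i) (cs.simple s)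
              rw [cs.length_simple] at hge1 hge2
              rw [← he2] at hge2
              omega
          have := ih (n-2) (by omega) w'' i hlw'' hl''i t
          rw [heq]
          exact this

lemma rho_sroot_mem_PhiPlus {w : W} {s : S}
    (h : cs.length (w * cs.simple s) = cs.length w + 1) : rho w (sroot s) ∈ PhiPlus rho :=
  ⟨⟨w, s, rfl⟩, rho_sroot_nonneg hrho hsmall (cs.length w) w s rfl h⟩

lemma root_pos_or_neg {u : S → ℝ} (hu : u ∈ Phi rho) :
    u ∈ PhiPlus rho ∨ u ∈ PhiMinus rho := by
  obtain ⟨w, s, rfl⟩ := hu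
  rcases cs.length_mul_simple w s with h | h
  · exact Or.inl (rho_sroot_mem_PhiPlus hrho hsmall h)
  · right
    have hl : cs.length ((w * cs.simple s) * cs.simple s) = cs.length (w * cs.simple s) + 1 := by
      rw [cs.simple_mul_simple_cancel_right]; omega
    have hmem := rho_sroot_mem_PhiPlus hrho hsmall hl
    have : -(rho w (sroot s)) = rho (w * cs.simple s) (sroot s) := by
      rw [map_mul, Module.End.mul_apply, rho_simple_sroot_self hrho, map_neg]
    show -(rho w (sroot s)) ∈ PhiPlus rho
    rw [this]
    exact hmem

lemma refl_mem_PhiPlus {u : S → ℝ} (hu : u ∈ PhiPlus rho) (s : S) (hne : u ≠ sroot s) :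
    u - form M (sroot s) u • sroot s ∈ PhiPlus rho := by
  have hPhi : u - form M (sroot s) u • sroot s ∈ Phi rho := by
    rw [← hrho]
    exact rho_mem_Phi hrho hu.1 _
  rcases root_pos_or_neg hrho hsmall hPhi with h | h
  · exact h
  · exfalso
    have hcoord : ∀ t, t ≠ s → u t = 0 := by
      intro t ht
      have h1 := h.2 t
      have h2 := hu.2 t
      simp only [Pi.neg_apply, Pi.sub_apply, Pi.smul_apply, smul_eq_mul, sroot,
        Pi.single_eq_of_ne ht] at h1
      linarith
    have hus : u = (u s) • sroot s := by
      funext t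
      rcases eq_or_ne t s with rfl | ht
      · simp [sroot, Pi.single_eq_same]
      · simp [sroot, Pi.single_eq_of_ne ht, hcoord t ht]
    have hform := form_root_self hrho hu.1
    rw [hus, form_smul_right, form_symm, form_smul_right, form_sroot_sroot_self] at hform
    have hsq : u s = 1 ∨ u s = -1 := by
      have h1 : u s * u s = 1 := by nlinarith
      rcases mul_self_eq_one_iff.mp h1 with h | h
      · exact Or.inl h
      · exact Or.inr h
    have hnn := hu.2 s
    rcases hsq with h1 | h1
    · apply hne
      rw [hus, h1, one_smul]
    · rw [h1] at hnn; linarith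

end pos

section kk

lemma Xv_ne_zero : Xv ≠ 0 := by
  unfold Xv
  intro h
  have hinj : Function.Injective (algebraMap (MvPolynomial (Fin 2) ℚ) KK) :=
    IsFractionRing.injective _ _
  have : (MvPolynomial.X 0 : MvPolynomial (Fin 2) ℚ) = 0 := by
    apply hinj; simpa using h
  exact MvPolynomial.X_ne_zero 0 this

lemma Yv_ne_zero : Yv ≠ 0 := by
  unfold Yv
  intro h
  have hinj : Function.Injective (algebraMap (MvPolynomial (Fin 2) ℚ) KK) :=
    IsFractionRing.injective _ _
  have : (MvPolynomial.X 1 : MvPolynomial (Fin 2) ℚ) = 0 := by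
    apply hinj; simpa using h
  exact MvPolynomial.X_ne_zero 1 this

lemma Ty_X_sq : Ty (Polynomial.X ^ 2) = Yv ^ 2 := by
  simp [Ty]

lemma ebase_eq {rho : W →* ((S → ℝ) →ₗ[ℝ] (S → ℝ))} {u : S → ℝ} (h : u ∈ PhiPlus rho) :
    ebase rho u = Finsupp.single (⟨u, h⟩ : ↥(PhiPlus rho)) (1 : KK) := by
  unfold ebase
  rw [dif_pos h]

end kk

section calcs

variable {K V : Type*} [Field K] [AddCommGroup V] [Module K V]
  (x y T1 T2 : K) (eu ev ea : V)

lemma calcA (hy : y ≠ 0) :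
    (eu + (x * T1) • ea) - ((y^2)⁻¹ * T1) • (x * y^2) • ea = eu := by
  match_scalars <;> (try field_simp) <;> (try ring) <;>
    (try (rw [add_eq_zero_iff_eq_neg, div_eq_iff (by simp [pow_ne_zero, mul_ne_zero, hy])]; ring)) <;>
    (try (simp only [inv_pow]; field_simp)) <;> (try ring)

lemma calcB (hx : x ≠ 0) (hy : y ≠ 0) :
    (eu - ((y^2)⁻¹ * T1) • ea) + (x * T1) • (x⁻¹ * (y^2)⁻¹) • ea = eu := by
  match_scalars <;> (try field_simp) <;> (try ring) <;>
    (try (rw [add_eq_zero_iff_eq_neg, div_eq_iff (by simp [pow_ne_zero, mul_ne_zero, hy])]; ring)) <;>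
    (try (simp only [inv_pow]; field_simp)) <;> (try ring)

lemma calcC (hy : y ≠ 0) :
    y⁻¹ • (y • eu + (x * T2) • ea) - ((y^3)⁻¹ * T2) • (x * y^2) • ea = eu := by
  match_scalars <;> (try field_simp) <;> (try ring) <;>
    (try (rw [add_eq_zero_iff_eq_neg, div_eq_iff (by simp [pow_ne_zero, mul_ne_zero, hy])]; ring)) <;>
    (try (simp only [inv_pow]; field_simp)) <;> (try ring)

lemma calcD (hx : x ≠ 0) (hy : y ≠ 0) :
    (1 - y) • (y⁻¹ • ev - ((y^3)⁻¹ * T2) • ea) +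
      ((1 - y⁻¹) • ev + eu - ((y^2)⁻¹ * T1) • ea + ((y^2)⁻¹ * (y⁻¹ - 1) * T2) • ea) +
      (x * T1) • (x⁻¹ * (y^2)⁻¹) • ea = eu := by
  match_scalars <;> (try field_simp) <;> (try ring) <;>
    (try (rw [add_eq_zero_iff_eq_neg, div_eq_iff (by simp [pow_ne_zero, mul_ne_zero, hy])]; ring)) <;>
    (try (simp only [inv_pow]; field_simp)) <;> (try ring)

lemma calcE (hy : y ≠ 0) :
    (1 - y⁻¹) • (y • ev + (x * T1) • ea) + ((1 - y) • ev + eu + (x * T2) • ea) -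
      ((y^2)⁻¹ * T2) • (x * y^2) • ea + ((y^2)⁻¹ * (y⁻¹ - 1) * T1) • (x * y^2) • ea = eu := by
  match_scalars <;> (try field_simp) <;> (try ring) <;>
    (try (rw [add_eq_zero_iff_eq_neg, div_eq_iff (by simp [pow_ne_zero, mul_ne_zero, hy])]; ring)) <;>
    (try (simp only [inv_pow]; field_simp)) <;> (try ring)

lemma calcF (hx : x ≠ 0) (hy : y ≠ 0) :
    y • (y⁻¹ • eu - ((y^3)⁻¹ * T1) • ea) + (x * T1) • (x⁻¹ * (y^2)⁻¹) • ea = eu := by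
  match_scalars <;> (try field_simp) <;> (try ring) <;>
    (try (rw [add_eq_zero_iff_eq_neg, div_eq_iff (by simp [pow_ne_zero, mul_ne_zero, hy])]; ring)) <;>
    (try (simp only [inv_pow]; field_simp)) <;> (try ring)

end calcs

/-- **Lemma 3.8.** Every `ψ_s` is invertible, with the explicit inverse `ρ_s`. -/
theorem stmt12 {S : Type} [DecidableEq S] [Fintype S] {W : Type} [Group W]
    (M : CoxeterMatrix S) (hsmall : SmallType M) (hnt : NoTriangle M)
    (cs : CoxeterSystem M W)
    (rho : W →* ((S → ℝ) →ₗ[ℝ] (S → ℝ))) (hrho : IsGeomRep M cs rho)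
    (T : S → (S → ℝ) → Polynomial ℚ) (hT : TSpec M cs rho T)
    (ψ : S → Module.End KK (VV rho)) (hψ : PsiSpec M rho T ψ)
    (r : S → Module.End KK (VV rho))
    (hr : ∀ s : S, ∀ u ∈ PhiPlus rho,
      (u = sroot s →
        r s (ebase rho u) = (Xv⁻¹ * (Yv ^ 2)⁻¹) • ebase rho (sroot s)) ∧
      (form M (sroot s) u = 0 →
        r s (ebase rho u) =
          ebase rho u - ((Yv ^ 2)⁻¹ * Ty (T s u)) • ebase rho (sroot s)) ∧
      (0 < form M (sroot s) u → u ≠ sroot s →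
        r s (ebase rho u) =
          (1 - Yv⁻¹) • ebase rho u + ebase rho (u - form M (sroot s) u • sroot s)
            - ((Yv ^ 2)⁻¹ * Ty (T s (u - form M (sroot s) u • sroot s))) • ebase rho (sroot s)
            + ((Yv ^ 2)⁻¹ * (Yv⁻¹ - 1) * Ty (T s u)) • ebase rho (sroot s)) ∧
      (form M (sroot s) u < 0 →
        r s (ebase rho u) =
          Yv⁻¹ • ebase rho (u - form M (sroot s) u • sroot s)
            - ((Yv ^ 3)⁻¹ * Ty (T s (u - form M (sroot s) u • sroot s))) •
                ebase rho (sroot s))) :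
    ∀ s : S, ψ s * r s = 1 ∧ r s * ψ s = 1 := by
  intro s
  have hX := Xv_ne_zero
  have hY := Yv_ne_zero
  have hAs : sroot s ∈ PhiPlus rho := sroot_mem_PhiPlus hrho s
  have hψα : ψ s (ebase rho (sroot s)) = (Xv * Yv ^ 2) • ebase rho (sroot s) := by
    have h := (hψ s (sroot s) hAs).1 rfl
    rw [h, hT.1 s, Ty_X_sq]
  have hrα : r s (ebase rho (sroot s)) = (Xv⁻¹ * (Yv ^ 2)⁻¹) • ebase rho (sroot s) :=
    (hr s (sroot s) hAs).1 rfl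
  have key : ∀ u, ∀ hu : u ∈ PhiPlus rho,
      ψ s (r s (ebase rho u)) = ebase rho u ∧ r s (ψ s (ebase rho u)) = ebase rho u := by
    intro u hu
    by_cases hus : u = sroot s
    · subst hus
      constructor
      · rw [hrα, map_smul, hψα, smul_smul]
        have h1 : (Xv⁻¹ * (Yv ^ 2)⁻¹) * (Xv * Yv ^ 2) = 1 := by field_simp
        rw [h1, one_smul]
      · rw [hψα, map_smul, hrα, smul_smul]
        have h1 : (Xv * Yv ^ 2) * (Xv⁻¹ * (Yv ^ 2)⁻¹) = 1 := by field_simp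
        rw [h1, one_smul]
    · rcases lt_trichotomy (form M (sroot s) u) 0 with hneg | hzero | hpos
      · -- negative case
        obtain ⟨v, hvdef⟩ : ∃ v, v = u - form M (sroot s) u • sroot s := ⟨_, rfl⟩
        have hv : v ∈ PhiPlus rho := hvdef ▸ refl_mem_PhiPlus hrho hsmall hu s hus
        have hformv : form M (sroot s) v = -(form M (sroot s) u) := by
          rw [hvdef, form_sroot_refl]
        have hvpos : 0 < form M (sroot s) v := by rw [hformv]; linarith
        have hvu : v - form M (sroot s) v • sroot s = u := by
          rw [hformv, hvdef]; module
        have hvns : v ≠ sroot s := by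
          intro h
          have h2 : form M (sroot s) v = 2 := by rw [h]; exact form_sroot_sroot_self M s
          have ha : form M (sroot s) u = -2 := by rw [hformv] at h2; linarith
          have hcf := congrFun hvdef s
          rw [h] at hcf
          have hss : sroot s s = (1:ℝ) := by simp [sroot]
          simp only [Pi.sub_apply, Pi.smul_apply, smul_eq_mul, hss] at hcf
          rw [ha] at hcf
          linarith [hu.2 s]
        have hru := (hr s u hu).2.2.2 hneg
        rw [← hvdef] at hru
        have hψu := (hψ s u hu).2.2.2 hneg
        rw [← hvdef] at hψu
        have hψv := (hψ s v hv).2.2.1 hvpos hvns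
        rw [hvu] at hψv
        have hrv := (hr s v hv).2.2.1 hvpos hvns
        rw [hvu] at hrv
        constructor
        · rw [hru]
          simp only [map_add, map_sub, map_smul]
          rw [hψv, hψα]
          exact calcC _ _ _ _ _ Yv_ne_zero
        · rw [hψu]
          simp only [map_add, map_sub, map_smul]
          rw [hru, hrv, hrα]
          exact calcD _ _ _ _ _ _ _ Xv_ne_zero Yv_ne_zero
      · -- zero case
        have hru := (hr s u hu).2.1 hzero
        have hψu := (hψ s u hu).2.1 hzero
        constructor
        · rw [hru]
          simp only [map_add, map_sub, map_smul]
          rw [hψu, hψα]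
          exact calcA _ _ _ _ _ Yv_ne_zero
        · rw [hψu]
          simp only [map_add, map_sub, map_smul]
          rw [hru, hrα]
          exact calcB _ _ _ _ _ Xv_ne_zero Yv_ne_zero
      · -- positive case
        obtain ⟨v, hvdef⟩ : ∃ v, v = u - form M (sroot s) u • sroot s := ⟨_, rfl⟩
        have hv : v ∈ PhiPlus rho := hvdef ▸ refl_mem_PhiPlus hrho hsmall hu s hus
        have hformv : form M (sroot s) v = -(form M (sroot s) u) := by
          rw [hvdef, form_sroot_refl]
        have hvneg : form M (sroot s) v < 0 := by rw [hformv]; linarith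
        have hvu : v - form M (sroot s) v • sroot s = u := by
          rw [hformv, hvdef]; module
        have hru := (hr s u hu).2.2.1 hpos hus
        rw [← hvdef] at hru
        have hψu := (hψ s u hu).2.2.1 hpos hus
        rw [← hvdef] at hψu
        have hψv := (hψ s v hv).2.2.2 hvneg
        rw [hvu] at hψv
        have hrv := (hr s v hv).2.2.2 hvneg
        rw [hvu] at hrv
        constructor
        · rw [hru]
          simp only [map_add, map_sub, map_smul]
          rw [hψu, hψv, hψα]
          exact calcE _ _ _ _ _ _ _ Yv_ne_zero
        · rw [hψu]
          simp only [map_add, map_sub, map_smul]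
          rw [hrv, hrα]
          exact calcF _ _ _ _ _ Xv_ne_zero Yv_ne_zero
  constructor
  · apply Finsupp.lhom_ext
    intro a b
    obtain ⟨u, hu⟩ := a
    rw [Module.End.mul_apply, Module.End.one_apply]
    have hb : (Finsupp.single (⟨u, hu⟩ : ↥(PhiPlus rho)) b : VV rho)
        = b • Finsupp.single (⟨u, hu⟩ : ↥(PhiPlus rho)) (1 : KK) := by
      rw [Finsupp.smul_single', mul_one]
    rw [hb, map_smul, map_smul, ← ebase_eq hu, (key u hu).1]
  · apply Finsupp.lhom_ext
    intro a b
    obtain ⟨u, hu⟩ := a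
    rw [Module.End.mul_apply, Module.End.one_apply]
    have hb : (Finsupp.single (⟨u, hu⟩ : ↥(PhiPlus rho)) b : VV rho)
        = b • Finsupp.single (⟨u, hu⟩ : ↥(PhiPlus rho)) (1 : KK) := by
      rw [Finsupp.smul_single', mul_one]
    rw [hb, map_smul, map_smul, ← ebase_eq hu, (key u hu).2]

end ArtinInj
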